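/- For every τ ∈ ℂ with Im τ > 0 and all z, λ, κ ∈ ℂ: ϑ₁(κ,τ)²·ϑ₁(z+λ,τ)·ϑ₁(z−λ,τ) − ϑ₁(λ,τ)²·ϑ₁(z+κ,τ)·ϑ₁(z−κ,τ) = ϑ₁(z,τ)²·ϑ₁(κ+λ,τ)·ϑ₁(κ−λ,τ). -/

import Mathlib

/-
With `T n z τ = exp(2πinz + πin²τ)` (`jacobiTheta₂_term`) one has
`ϑ₁(z,τ) = -∑ₘ T (2m+1) ((z+½)/2) (τ/4)`. In the double series for `ϑ₁(x+y)ϑ₁(x−y)` substitute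
`a = m+n+1`, `b = m−n`: since `(m+½)² + (n+½)² = (a² + b²)/2`, the summand becomes
`T a (x+½) (τ/2) · T b y (τ/2)`, and `(m, n)` runs over ℤ² exactly when `(a, b)` runs over the
pairs of opposite parity. Splitting into the even and odd parts `E`, `O` of `∑ₙ T n · (τ/2)`
(`jacobiTheta₂Even`, `jacobiTheta₂Odd`) and using `T n (w+½) = (-1)ⁿ T n w` gives
`ϑ₁(x+y)ϑ₁(x−y) = E(x)O(y) − O(x)E(y)`. Every function with such an addition formula satisfies
the three-term identity, by a polynomial identity in the values of `E` and `O`.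
-/

open Complex

/-- Jacobi's first theta function
`ϑ₁(z,τ) = −∑_{m∈ℤ} exp(πi(m+1/2)²τ + 2πi(m+1/2)(z+1/2))` (here `theta1 τ z = ϑ₁(z,τ)`). -/
noncomputable def theta1 (τ z : ℂ) : ℂ :=
  -∑' m : ℤ, Complex.exp ((Real.pi : ℂ) * Complex.I * ((m : ℂ) + 1 / 2) ^ 2 * τ +
    2 * (Real.pi : ℂ) * Complex.I * ((m : ℂ) + 1 / 2) * (z + 1 / 2))

theorem three_term_identity_of_add_mul_sub_eq {G R : Type*} [AddCommGroup G] [CommRing R]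
    {f P Q : G → R} (hf : ∀ x y, f (x + y) * f (x - y) = P x * Q y - Q x * P y) (z l k : G) :
    f k ^ 2 * f (z + l) * f (z - l) - f l ^ 2 * f (z + k) * f (z - k) =
      f z ^ 2 * f (k + l) * f (k - l) := by
  have hsq : ∀ w, f w ^ 2 = P w * Q 0 - Q w * P 0 := fun w => by
    simpa [sq] using hf w 0
  rw [hsq, hsq, hsq, mul_assoc, mul_assoc, mul_assoc, hf, hf, hf]
  ring

lemma Int.two_mul_injective : Function.Injective fun k : ℤ => 2 * k :=
  mul_right_injective₀ two_ne_zero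

lemma Int.two_mul_add_one_injective : Function.Injective fun k : ℤ => 2 * k + 1 :=
  (add_left_injective 1).comp Int.two_mul_injective

/-- `inl` covers the pairs with even sum, `inr` those with odd sum. -/
def Int.prodSumEquivByParity : (ℤ × ℤ) ⊕ (ℤ × ℤ) ≃ ℤ × ℤ where
  toFun
    | .inl (k, l) => (k + l, k - l)
    | .inr (k, l) => (k + l, k - l - 1)
  invFun p :=
    if (p.1 + p.2) % 2 = 0 then .inl ((p.1 + p.2) / 2, (p.1 - p.2) / 2)
    else .inr ((p.1 + p.2 + 1) / 2, (p.1 - p.2 - 1) / 2)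
  left_inv := by
    rintro (⟨k, l⟩ | ⟨k, l⟩) <;> dsimp only <;> split_ifs <;>
      (try simp only [Sum.inl.injEq, Sum.inr.injEq, Prod.mk.injEq]) <;> omega
  right_inv := by
    rintro ⟨m, n⟩
    dsimp only
    split_ifs <;> simp only [Prod.mk.injEq] <;> omega

lemma tsum_mul_tsum_eq_tsum_add_tsum_by_parity {R : Type*} [NormedRing R] [CompleteSpace R]
    {a b : ℤ → R} (ha : Summable fun m => ‖a m‖) (hb : Summable fun n => ‖b n‖) :
    (∑' m, a m) * ∑' n, b n =
      ∑' p : ℤ × ℤ, a (p.1 + p.2) * b (p.1 - p.2) +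
        ∑' p : ℤ × ℤ, a (p.1 + p.2) * b (p.1 - p.2 - 1) := by
  set e := Int.prodSumEquivByParity
  have hab : Summable fun c => a (e c).1 * b (e c).2 :=
    (summable_mul_of_summable_norm ha hb).comp_injective e.injective
  rw [tsum_mul_tsum_of_summable_norm ha hb, ← e.tsum_eq]
  exact (hab.comp_injective Sum.inl_injective).tsum_sum (hab.comp_injective Sum.inr_injective)

lemma jacobiTheta₂_term_add_half (n : ℤ) (z τ : ℂ) :
    jacobiTheta₂_term n (z + 1 / 2) τ = (-1) ^ n * jacobiTheta₂_term n z τ := by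
  rw [jacobiTheta₂_term, jacobiTheta₂_term, ← exp_pi_mul_I, ← exp_int_mul, ← exp_add]
  congr 1
  ring

lemma summable_norm_jacobiTheta₂_term_comp {τ : ℂ} (hτ : 0 < τ.im) (z : ℂ) {f : ℤ → ℤ}
    (hf : Function.Injective f) : Summable fun k => ‖jacobiTheta₂_term (f k) z τ‖ :=
  (summable_norm_iff.mpr ((summable_jacobiTheta₂_term_iff z τ).mpr hτ)).comp_injective hf

noncomputable def jacobiTheta₂Even (z τ : ℂ) : ℂ := ∑' k : ℤ, jacobiTheta₂_term (2 * k) z τ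

noncomputable def jacobiTheta₂Odd (z τ : ℂ) : ℂ := ∑' k : ℤ, jacobiTheta₂_term (2 * k + 1) z τ

lemma jacobiTheta₂Even_add_half (z τ : ℂ) :
    jacobiTheta₂Even (z + 1 / 2) τ = jacobiTheta₂Even z τ :=
  tsum_congr fun k => by
    rw [jacobiTheta₂_term_add_half, (even_two_mul k).neg_one_zpow, one_mul]

lemma jacobiTheta₂Odd_add_half (z τ : ℂ) :
    jacobiTheta₂Odd (z + 1 / 2) τ = -jacobiTheta₂Odd z τ := by
  rw [jacobiTheta₂Odd, jacobiTheta₂Odd, ← tsum_neg]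
  exact tsum_congr fun k => by
    rw [jacobiTheta₂_term_add_half, (odd_two_mul_add_one k).neg_one_zpow, neg_one_mul]

lemma theta1_eq_neg_tsum (τ z : ℂ) :
    theta1 τ z = -∑' m : ℤ, jacobiTheta₂_term (2 * m + 1) ((z + 1 / 2) / 2) (τ / 4) := by
  rw [theta1]
  congr 1
  refine tsum_congr fun m => ?_
  rw [jacobiTheta₂_term]
  congr 1
  push_cast
  ring

lemma jacobiTheta₂_term_odd_mul_odd (x y τ : ℂ) (m n : ℤ) :
    jacobiTheta₂_term (2 * m + 1) ((x + y + 1 / 2) / 2) (τ / 4) *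
        jacobiTheta₂_term (2 * n + 1) ((x - y + 1 / 2) / 2) (τ / 4) =
      jacobiTheta₂_term (m + n + 1) (x + 1 / 2) (τ / 2) * jacobiTheta₂_term (m - n) y (τ / 2) := by
  simp only [jacobiTheta₂_term, ← exp_add]
  congr 1
  push_cast
  ring

lemma theta1_add_mul_theta1_sub {τ : ℂ} (hτ : 0 < τ.im) (x y : ℂ) :
    theta1 τ (x + y) * theta1 τ (x - y) =
      jacobiTheta₂Even x (τ / 2) * jacobiTheta₂Odd y (τ / 2) -
        jacobiTheta₂Odd x (τ / 2) * jacobiTheta₂Even y (τ / 2) := by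
  have hτ₂ : 0 < (τ / 2).im := by simpa using hτ
  have hτ₄ : 0 < (τ / 4).im := by simpa using hτ
  have hodd (z : ℂ) := summable_norm_jacobiTheta₂_term_comp hτ₂ z Int.two_mul_add_one_injective
  have heven (z : ℂ) := summable_norm_jacobiTheta₂_term_comp hτ₂ z Int.two_mul_injective
  rw [theta1_eq_neg_tsum, theta1_eq_neg_tsum, neg_mul_neg, tsum_mul_tsum_eq_tsum_add_tsum_by_parity
    (summable_norm_jacobiTheta₂_term_comp hτ₄ _ Int.two_mul_add_one_injective)
    (summable_norm_jacobiTheta₂_term_comp hτ₄ _ Int.two_mul_add_one_injective)]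
  calc
    _ = jacobiTheta₂Odd (x + 1 / 2) (τ / 2) * jacobiTheta₂Even y (τ / 2) +
          jacobiTheta₂Even (x + 1 / 2) (τ / 2) * jacobiTheta₂Odd y (τ / 2) := by
      simp only [jacobiTheta₂Even, jacobiTheta₂Odd]
      rw [tsum_mul_tsum_of_summable_norm (hodd _) (heven _),
        tsum_mul_tsum_of_summable_norm (heven _) (hodd _)]
      congr 1 <;> refine tsum_congr fun p => ?_ <;> rw [jacobiTheta₂_term_odd_mul_odd] <;>
        congr 2 <;> ring
    _ = _ := by
      rw [jacobiTheta₂Odd_add_half, jacobiTheta₂Even_add_half]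
      ring

/-- The theta identity derived from the three-term equation:
`ϑ₁(κ)²ϑ₁(z+λ)ϑ₁(z−λ) − ϑ₁(λ)²ϑ₁(z+κ)ϑ₁(z−κ) = ϑ₁(z)²ϑ₁(κ+λ)ϑ₁(κ−λ)`. -/
theorem theta1_three_term_identity (τ : ℂ) (hτ : 0 < τ.im) (z lam κ : ℂ) :
    theta1 τ κ ^ 2 * theta1 τ (z + lam) * theta1 τ (z - lam) -
      theta1 τ lam ^ 2 * theta1 τ (z + κ) * theta1 τ (z - κ) =
    theta1 τ z ^ 2 * theta1 τ (κ + lam) * theta1 τ (κ - lam) :=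
  three_term_identity_of_add_mul_sub_eq (theta1_add_mul_theta1_sub hτ) z lam κ
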